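/- arXiv:1312.1701 — 9 statements merged into one kernel-verified Lean document; each statement's English description precedes it below -/
import Mathlib

section
/- If Y is a dense subspace of a Tychonoff space X and F is a closed remote subset of βX, then the preimage of F under the canonical map βY → βX is a remote closed subset of βY. -/
/-! The extension `βY → βX` maps `cl_{βY} N` into `cl_{βX} N`, and a set that is nowhere dense
in a subspace is nowhere dense in the whole space; so `cl_{βY} N` meets the preimage of `F`
only if `cl_{βX} N` meets `F`. -/

open TopologicalSpace

/-- A closed set `F ⊆ βX` is remote if it is disjoint from `cl_{βX} N` for every
nowhere dense `N ⊆ X`. -/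
def IsRemoteSet (X : Type*) [TopologicalSpace X] (F : Set (StoneCech X)) : Prop :=
  ∀ N : Set X, interior (closure N) = ∅ →
    F ∩ closure (stoneCechUnit '' N) = ∅

theorem IsRemoteSet.preimage_stoneCechExtend {X Y : Type*} [TopologicalSpace X]
    [TopologicalSpace Y] {g : Y → X} (hg : Continuous g)
    (hnd : ∀ N : Set Y, IsNowhereDense N → IsNowhereDense (g '' N))
    {F : Set (StoneCech X)} (hF : IsRemoteSet X F) :
    IsRemoteSet Y (stoneCechExtend (continuous_stoneCechUnit.comp hg) ⁻¹' F) := by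
  intro N hN
  set βg := stoneCechExtend (continuous_stoneCechUnit.comp hg)
  have hβg_unit : βg '' (stoneCechUnit '' N) = stoneCechUnit '' (g '' N) := by
    rw [Set.image_image, Set.image_image]
    exact Set.image_congr fun y _ => congrFun (stoneCechExtend_extends _) y
  have hmaps : Set.MapsTo βg (closure (stoneCechUnit '' N))
      (closure (stoneCechUnit '' (g '' N))) := fun z hz =>
    hβg_unit ▸ image_closure_subset_closure_image (continuous_stoneCechExtend _) ⟨z, hz, rfl⟩
  refine Set.eq_empty_of_forall_notMem fun z ⟨hzF, hzN⟩ => ?_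
  exact (hF _ (hnd N hN)).subset ⟨hzF, hmaps hzN⟩

theorem preimage_of_remote_is_remote_general
    (X : Type*) [TopologicalSpace X]
    (Y : Set X)
    (f : StoneCech Y → StoneCech X)
    (hf : f = stoneCechExtend
      (show Continuous (fun y : Y => stoneCechUnit (y : X)) from
        continuous_stoneCechUnit.comp continuous_subtype_val))
    (F : Set (StoneCech X)) (hFc : IsClosed F) (hFr : IsRemoteSet X F) :
    IsClosed (f ⁻¹' F) ∧ IsRemoteSet Y (f ⁻¹' F) := by
  subst hf
  exact ⟨hFc.preimage (continuous_stoneCechExtend _),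
    hFr.preimage_stoneCechExtend continuous_subtype_val fun _ hN => hN.image_val⟩

/-- If `Y` is a dense subspace of a Tychonoff space `X` and `F` is a closed remote subset
of `βX`, then the preimage of `F` under the canonical map `βY → βX` is a remote closed
subset of `βY`. -/
theorem preimage_of_remote_is_remote
    (X : Type*) [TopologicalSpace X] [T35Space X]
    (Y : Set X) (hY : Dense Y)
    (f : StoneCech Y → StoneCech X)
    (hf : f = stoneCechExtend
      (show Continuous (fun y : Y => stoneCechUnit (y : X)) from
        continuous_stoneCechUnit.comp continuous_subtype_val))
    (F : Set (StoneCech X)) (hFc : IsClosed F) (hFr : IsRemoteSet X F) :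
    IsClosed (f ⁻¹' F) ∧ IsRemoteSet Y (f ⁻¹' F) :=
  preimage_of_remote_is_remote_general X Y f hf F hFc hFr
end

section
/- If Y is a dense subspace of a Tychonoff space X, then re(Y) ≤ re(X), where re(Z) denotes the minimal character of a nonempty closed remote subset of βZ (and ∞ if none exists). -/
open TopologicalSpace Cardinal

/-!
The extension `βY → βX` of the inclusion `Y → X` is surjective, because `Y` is dense and `βY`
is compact. Hence the preimage of a nonempty closed remote `F ⊆ βX` is nonempty and closed, and it
is cut out by the preimages of the open sets cutting out `F`. It is remote because a nowhere dense
subset of `Y` is nowhere dense in `X`, and its closure in `βY` is mapped into its closure in `βX`.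
-/

open Function Set

theorem Continuous.surjective_of_denseRange {α β : Type*} [TopologicalSpace α]
    [TopologicalSpace β] [CompactSpace α] [T2Space β] {f : α → β} (hf : Continuous f)
    (hd : DenseRange f) : Surjective f := by
  rw [← range_eq_univ, ← (isCompact_range hf).isClosed.closure_eq]
  exact hd.closure_range

section StoneCechMap

variable {X Y : Type*} [TopologicalSpace X] [TopologicalSpace Y] {e : Y → X}

noncomputable def stoneCechMap (he : Continuous e) : StoneCech Y → StoneCech X :=
  stoneCechExtend (continuous_stoneCechUnit.comp he)

theorem continuous_stoneCechMap (he : Continuous e) : Continuous (stoneCechMap he) :=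
  continuous_stoneCechExtend _

theorem stoneCechMap_comp_stoneCechUnit (he : Continuous e) :
    stoneCechMap he ∘ stoneCechUnit = stoneCechUnit ∘ e :=
  stoneCechExtend_extends _

theorem surjective_stoneCechMap (he : Continuous e) (hd : DenseRange e) :
    Surjective (stoneCechMap he) := by
  refine (continuous_stoneCechMap he).surjective_of_denseRange ?_
  have hrange : range (stoneCechUnit ∘ e) ⊆ range (stoneCechMap he) := by
    rw [← stoneCechMap_comp_stoneCechUnit he]
    exact range_comp_subset_range _ _
  exact (denseRange_stoneCechUnit.comp hd continuous_stoneCechUnit).mono hrange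

theorem IsRemoteSet.preimage_stoneCechMap (he : Continuous e)
    (hnd : ∀ N : Set Y, IsNowhereDense N → IsNowhereDense (e '' N))
    {F : Set (StoneCech X)} (hF : IsRemoteSet X F) :
    IsRemoteSet Y (stoneCechMap he ⁻¹' F) := by
  intro N hN
  have hdisj := (disjoint_iff_inter_eq_empty.2 (hF _ (hnd N hN))).preimage (stoneCechMap he)
  rw [← image_comp, ← stoneCechMap_comp_stoneCechUnit he, image_comp] at hdisj
  exact disjoint_iff_inter_eq_empty.1 <|
    hdisj.mono_right (closure_subset_preimage_closure_image (continuous_stoneCechMap he))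

end StoneCechMap

theorem re_dense_subspace_le_general
    (X : Type*) [TopologicalSpace X]
    (Y : Set X) (hY : Dense Y)
    (F : Set (StoneCech X)) (hFne : F.Nonempty) (hFc : IsClosed F)
    (hFr : IsRemoteSet X F)
    (𝒰 : Set (Set (StoneCech X))) (h𝒰o : ∀ U ∈ 𝒰, IsOpen U ∧ F ⊆ U)
    (h𝒰 : F = ⋂₀ 𝒰) :
    ∃ G : Set (StoneCech Y), G.Nonempty ∧ IsClosed G ∧ IsRemoteSet Y G ∧
      ∃ 𝒱 : Set (Set (StoneCech Y)), (∀ V ∈ 𝒱, IsOpen V ∧ G ⊆ V) ∧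
        G = ⋂₀ 𝒱 ∧ #𝒱 ≤ #𝒰 := by
  set f := stoneCechMap (e := ((↑) : Y → X)) continuous_subtype_val
  have hf : Continuous f := continuous_stoneCechMap _
  refine ⟨f ⁻¹' F, hFne.preimage (surjective_stoneCechMap _ hY.denseRange_val),
    hFc.preimage hf, hFr.preimage_stoneCechMap _ fun N hN ↦ hN.image_val,
    preimage f '' 𝒰, ?_, by rw [h𝒰, sInter_image, preimage_sInter], mk_image_le⟩
  rintro _ ⟨U, hU, rfl⟩
  exact ⟨(h𝒰o U hU).1.preimage hf, preimage_mono (h𝒰o U hU).2⟩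

/-- If `Y` is a dense subspace of a Tychonoff space `X`, then `re(Y) ≤ re(X)`:
for every nonempty closed remote subset `F` of `βX` and every family `𝒰` of open
sets of `βX` intersecting to `F`, there is a nonempty closed remote subset `G` of
`βY` together with a family of open sets of `βY` intersecting to `G` of cardinality
at most that of `𝒰`.  (If `X` has no remote set, i.e. `re(X) = ∞`, this is vacuous.) -/
theorem re_dense_subspace_le
    (X : Type*) [TopologicalSpace X] [T35Space X]
    (Y : Set X) (hY : Dense Y)
    (F : Set (StoneCech X)) (hFne : F.Nonempty) (hFc : IsClosed F)
    (hFr : IsRemoteSet X F)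
    (𝒰 : Set (Set (StoneCech X))) (h𝒰o : ∀ U ∈ 𝒰, IsOpen U ∧ F ⊆ U)
    (h𝒰 : F = ⋂₀ 𝒰) :
    ∃ G : Set (StoneCech Y), G.Nonempty ∧ IsClosed G ∧ IsRemoteSet Y G ∧
      ∃ 𝒱 : Set (Set (StoneCech Y)), (∀ V ∈ 𝒱, IsOpen V ∧ G ⊆ V) ∧
        G = ⋂₀ 𝒱 ∧ #𝒱 ≤ #𝒰 :=
  re_dense_subspace_le_general X Y hY F hFne hFc hFr 𝒰 h𝒰o h𝒰
end

section
/- Let X be a non-compact, crowded, separable metrizable space and F a nonempty closed remote subset of βX. Then χ(F) ≥ cov(M). -/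
/-!
Pick `p ∈ F` and an ultrafilter `G` on `X` converging to `p` in `βX`; remoteness of `F` means
that `G` contains no nowhere dense set, in particular no singleton. Read `f : ℕ → ℕ` as a
sequence of codes of balls centred on a countable dense set, and let it greedily collect
pairwise far-apart, `G`-small balls: their centres form a discrete, hence nowhere dense, set.
For open `A ∈ G`, the `f` whose centres meet `A` form a dense open subset of `ω^ω`. Shrink
the members of `𝒰` to open `V ⊇ F` with `cl V ⊆ U`. If `𝒰` had fewer than `cov(M)` members, one
`f` would meet every finite intersection of the `V`'s, and compactness of `βX` would put a
point of `⋂ cl V ⊆ F` into the closure of a nowhere dense set. A finite `𝒰` is impossible,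
since `F` would then be a nonempty open set, so would contain a point of `X`.
-/

open TopologicalSpace Cardinal

/-- The covering number `cov(M)` of the meager ideal on Baire space `ω^ω`: the least
number of meager sets needed to cover `ω^ω`. -/
noncomputable def covMeager : Cardinal :=
  sInf { c | ∃ G : Set (Set (ℕ → ℕ)), (∀ A ∈ G, IsMeagre A) ∧
      ⋃₀ G = Set.univ ∧ #G = c }

universe u

universe v

open Filter Set Metric Topology

lemma DenseRange.exists_ultrafilter_tendsto {α β : Type*} [TopologicalSpace β] {f : α → β}
    (hf : DenseRange f) (b : β) : ∃ G : Ultrafilter α, Tendsto f G (𝓝 b) := by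
  obtain ⟨u, hu, hub⟩ := mem_closure_iff_ultrafilter.1 (hf b)
  rw [← image_univ] at hu
  refine ⟨.ofComapInfPrincipal hu, ?_⟩
  rw [Tendsto, ← Ultrafilter.coe_map, Ultrafilter.ofComapInfPrincipal_eq_of_map]
  exact hub

lemma IsDiscrete.isNowhereDense {X : Type*} [TopologicalSpace X] [T1Space X] [PerfectSpace X]
    {s : Set X} (hs : IsDiscrete s) : IsNowhereDense s := by
  refine isNowhereDense_iff_forall_notMem_nhds.2 fun x hx hcl => ?_
  obtain ⟨U, hUo, hUs⟩ := isDiscrete_iff_forall_mem_exists_isOpen.1 hs x hx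
  have hxU : x ∈ U := (hUs.symm ▸ mem_singleton x : x ∈ U ∩ s).1
  have hdisj : Disjoint (U \ {x}) (closure s) := by
    refine Disjoint.closure_right (disjoint_left.2 fun y hy hys => hy.2 ?_)
      (hUo.sdiff isClosed_singleton)
    exact hUs ▸ mem_inter hy.1 hys
  have hmem : (U \ {x}) ∩ closure s ∈ 𝓝[≠] x :=
    inter_mem (sdiff_mem_nhdsWithin_compl (hUo.mem_nhds hxU) _) (mem_nhdsWithin_of_mem_nhds hcl)
  exact empty_notMem _ (hdisj.inter_eq ▸ hmem)

lemma IsRemoteSet.notMem_of_tendsto {X : Type*} [TopologicalSpace X] {F : Set (StoneCech X)}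
    (hF : IsRemoteSet X F) {p : StoneCech X} (hp : p ∈ F) {G : Ultrafilter X}
    (hG : Tendsto stoneCechUnit G (𝓝 p)) {N : Set X} (hN : IsNowhereDense N) : N ∉ G :=
  fun hNG => (hF N hN).subset
    ⟨hp, mem_closure_of_tendsto hG (mem_of_superset hNG (subset_preimage_image _ _))⟩

lemma IsRemoteSet.stoneCechUnit_notMem {X : Type*} [TopologicalSpace X] [T1Space X]
    [PerfectSpace X] {F : Set (StoneCech X)} (hF : IsRemoteSet X F) (x : X) :
    stoneCechUnit x ∉ F := fun hx =>
  hF.notMem_of_tendsto hx (G := pure x) (tendsto_pure_nhds _ x)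
    subsingleton_singleton.isDiscrete.isNowhereDense rfl

lemma Ultrafilter.exists_closedBall_notMem {X : Type*} [MetricSpace X] {G : Ultrafilter X}
    (hG : ∀ x, {x} ∉ G) {s : Set X} (hs : s ∈ G) : ∃ x ∈ s, ∃ r > 0, closedBall x r ∉ G := by
  obtain ⟨x, hx, y, hy, hxy⟩ : s.Nontrivial := by
    refine not_subsingleton_iff.1 fun h => ?_
    obtain ⟨x, hx⟩ := G.nonempty_of_mem hs
    exact hG x (h.eq_singleton_of_mem hx ▸ hs)
  by_contra! hball
  have hd := dist_pos.2 hxy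
  have hdisj : Disjoint (closedBall x (dist x y / 3)) (closedBall y (dist x y / 3)) :=
    closedBall_disjoint_closedBall (by linarith)
  exact G.empty_notMem (hdisj.inter_eq ▸
    inter_mem (hball x hx _ (by positivity)) (hball y hy _ (by positivity)))

theorem nonempty_iInter_of_lift_mk_lt_covMeager {ι : Type v} {U : ι → Set (ℕ → ℕ)}
    (hU : ∀ i, U i ∈ residual (ℕ → ℕ))
    (hι : Cardinal.lift.{0} #ι < Cardinal.lift.{v} covMeager) : (⋂ i, U i).Nonempty := by
  by_contra h
  have hcover : ⋃₀ range (fun i => (U i)ᶜ) = Set.univ := by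
    rw [sUnion_range, ← compl_iInter, not_nonempty_iff_eq_empty.1 h, compl_empty]
  have hle : covMeager ≤ #(range fun i => (U i)ᶜ) := by
    refine csInf_le' ⟨_, forall_mem_range.2 fun i => ?_, hcover, rfl⟩
    rw [IsMeagre, compl_compl]
    exact hU i
  refine hι.not_ge ?_
  calc Cardinal.lift.{v} covMeager
      ≤ Cardinal.lift.{v} #(range fun i => (U i)ᶜ) := lift_le.2 hle
    _ ≤ Cardinal.lift.{0} #ι := mk_range_le_lift

lemma closure_inter_iInter_closure_nonempty {Y ι : Type*} [TopologicalSpace Y] [CompactSpace Y]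
    {D : Set Y} {V : ι → Set Y} (h : ∀ S : Finset ι, (D ∩ ⋂ i ∈ S, V i).Nonempty) :
    (closure D ∩ ⋂ i, closure (V i)).Nonempty :=
  isClosed_closure.isCompact.inter_iInter_nonempty _ (fun _ => isClosed_closure) fun S =>
    (h S).mono (inter_subset_inter subset_closure (iInter₂_mono fun _ _ => subset_closure))

namespace GenericBalls

section Apart

variable {X : Type*} [MetricSpace X]

def Apart (p q : X × ℝ) : Prop := p.2 + q.2 < dist p.1 q.1

instance : Std.Symm (Apart (X := X)) :=
  ⟨fun p q h => by rwa [Apart, add_comm, dist_comm]⟩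

/-- `G`-smallness of the chosen balls is what leaves room for a new ball inside every open set
in `G`. -/
def IsFresh (G : Ultrafilter X) (S : Set (X × ℝ)) (b : X × ℝ) : Prop :=
  closedBall b.1 b.2 ∉ G ∧ ∀ p ∈ S, Apart p b

lemma isDiscrete_image_fst {B : Set (X × ℝ)} (hpos : ∀ p ∈ B, 0 < p.2)
    (hB : B.Pairwise Apart) : IsDiscrete (Prod.fst '' B) := by
  refine isDiscrete_iff_forall_mem_exists_isOpen.2 ?_
  rintro _ ⟨p, hp, rfl⟩
  refine ⟨ball p.1 p.2, isOpen_ball, subset_antisymm ?_ ?_⟩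
  · rintro _ ⟨hq, q, hqB, rfl⟩
    by_contra hne
    have hpq : p.2 + q.2 < dist p.1 q.1 := hB hp hqB fun h => hne (h ▸ rfl)
    linarith [mem_ball'.1 hq, hpos q hqB]
  · exact singleton_subset_iff.2 ⟨mem_ball_self (hpos p hp), p, hp, rfl⟩

end Apart

variable {X : Type*} [MetricSpace X] [SeparableSpace X] [Nonempty X]

noncomputable def decodeBall (k : ℕ) : X × ℝ :=
  (denseSeq X k.unpair.1, (1 / 2) ^ k.unpair.2)

lemma decodeBall_radius_pos (k : ℕ) : 0 < (decodeBall k : X × ℝ).2 := by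
  simp only [decodeBall]
  positivity

lemma exists_isFresh_decodeBall {G : Ultrafilter X} (hG : ∀ x, {x} ∉ G) {A : Set X}
    (hAo : IsOpen A) (hAG : A ∈ G) {S : Set (X × ℝ)} (hSfin : S.Finite)
    (hS : ∀ p ∈ S, closedBall p.1 p.2 ∉ G) :
    ∃ k, (decodeBall k : X × ℝ).1 ∈ A ∧ IsFresh G S (decodeBall k) := by
  have hΓ : (⋃ p ∈ S, closedBall p.1 p.2) ∉ G := fun h =>
    let ⟨p, hp, hpG⟩ := (Ultrafilter.finite_biUnion_mem_iff hSfin).1 h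
    hS p hp hpG
  obtain ⟨x, ⟨hxA, hxΓ⟩, r, hr, hrG⟩ :=
    G.exists_closedBall_notMem hG (inter_mem hAG (Ultrafilter.compl_mem_iff_notMem.2 hΓ))
  obtain ⟨ρ, hρ, hρA⟩ := Metric.isOpen_iff.1 hAo x hxA
  have hfar : ∀ p ∈ S, p.2 < dist p.1 x := fun p hp =>
    not_le.1 fun h => hxΓ (mem_biUnion hp (mem_closedBall'.2 h))
  have hsmall : ∀ c > 0, ∀ᶠ m : ℕ in atTop, ((1 : ℝ) / 2) ^ m < c := fun c hc =>
    (tendsto_pow_atTop_nhds_zero_of_lt_one (by norm_num) (by norm_num)).eventually_lt_const hc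
  -- the radius `(1 / 2) ^ m` keeps the new ball inside `closedBall x r`, its centre in `A`, and
  -- the ball apart from those of `S`
  obtain ⟨m, hmr, hmρ, hmS⟩ := ((hsmall (r / 2) (by positivity)).and ((hsmall ρ hρ).and
    (hSfin.eventually_all.2 fun p hp =>
      hsmall ((dist p.1 x - p.2) / 2) (by linarith [hfar p hp])))).exists
  obtain ⟨k, hk⟩ :=
    (denseRange_denseSeq X).exists_dist_lt x (by positivity : (0 : ℝ) < (1 / 2) ^ m)
  have hdecode : decodeBall (Nat.pair k m) = (denseSeq X k, (1 / 2 : ℝ) ^ m) := by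
    simp only [decodeBall, Nat.unpair_pair]
  refine ⟨Nat.pair k m, ?_⟩
  rw [hdecode]
  refine ⟨?_, fun hG' => hrG ?_, fun p hp => ?_⟩
  · exact hρA (mem_ball'.2 (hk.trans hmρ))
  · exact mem_of_superset hG' (closedBall_subset_closedBall' (by rw [dist_comm]; linarith))
  · show p.2 + (1 / 2) ^ m < dist p.1 (denseSeq X k)
    linarith [dist_triangle p.1 (denseSeq X k) x, dist_comm x (denseSeq X k), hmS p hp]

open Classical in
noncomputable def ballStage (G : Ultrafilter X) (f : ℕ → ℕ) : ℕ → Set (X × ℝ)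
  | 0 => ∅
  | n + 1 =>
    if IsFresh G (ballStage G f n) (decodeBall (f n)) then
      insert (decodeBall (f n)) (ballStage G f n)
    else ballStage G f n

variable (G : Ultrafilter X) (f : ℕ → ℕ)

lemma monotone_ballStage : Monotone (ballStage G f) := by
  refine monotone_nat_of_le_succ fun n => ?_
  rw [ballStage]
  split_ifs
  exacts [subset_insert _ _, subset_rfl]

lemma finite_ballStage (n : ℕ) : (ballStage G f n).Finite := by
  induction n with
  | zero => exact finite_empty
  | succ n ih =>
    rw [ballStage]
    split_ifs
    exacts [ih.insert _, ih]

lemma closedBall_notMem_of_mem_ballStage {n : ℕ} {p : X × ℝ} (hp : p ∈ ballStage G f n) :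
    closedBall p.1 p.2 ∉ G := by
  induction n with
  | zero => exact absurd hp (notMem_empty p)
  | succ n ih =>
    rw [ballStage] at hp
    split_ifs at hp with h
    · rcases hp with rfl | hp
      exacts [h.1, ih hp]
    · exact ih hp

lemma radius_pos_of_mem_ballStage {n : ℕ} {p : X × ℝ} (hp : p ∈ ballStage G f n) : 0 < p.2 := by
  induction n with
  | zero => exact absurd hp (notMem_empty p)
  | succ n ih =>
    rw [ballStage] at hp
    split_ifs at hp with h
    · rcases hp with rfl | hp
      exacts [decodeBall_radius_pos _, ih hp]
    · exact ih hp

lemma pairwise_apart_ballStage (n : ℕ) : (ballStage G f n).Pairwise Apart := by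
  induction n with
  | zero => exact pairwise_empty _
  | succ n ih =>
    rw [ballStage]
    split_ifs with h
    exacts [pairwise_insert_of_symm.2 ⟨ih, fun q hq _ => symm (h.2 q hq)⟩, ih]

variable {G} in
lemma ballStage_congr {f g : ℕ → ℕ} {n : ℕ} (h : ∀ i < n, f i = g i) :
    ballStage G f n = ballStage G g n := by
  induction n with
  | zero => rfl
  | succ n ih =>
    rw [ballStage, ballStage, ih fun i hi => h i (by omega), h n n.lt_succ_self]

def centers : Set X := Prod.fst '' ⋃ n, ballStage G f n

lemma isDiscrete_centers : IsDiscrete (centers G f) := by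
  refine isDiscrete_image_fst (fun p hp => ?_) ?_
  · obtain ⟨n, hn⟩ := mem_iUnion.1 hp
    exact radius_pos_of_mem_ballStage G f hn
  · exact (pairwise_iUnion (monotone_ballStage G f).directed_le).2
      (pairwise_apart_ballStage G f)

def hitSet (A : Set X) : Set (ℕ → ℕ) := {f | (centers G f ∩ A).Nonempty}

variable {G}

lemma isOpen_hitSet (A : Set X) : IsOpen (hitSet G A) := by
  refine isOpen_iff_mem_nhds.2 ?_
  rintro f ⟨_, ⟨p, hp, rfl⟩, hpA⟩
  obtain ⟨n, hn⟩ := mem_iUnion.1 hp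
  have hnear : ∀ᶠ g in 𝓝 f, ∀ i ∈ Iio n, g i = f i := (finite_Iio n).eventually_all.2
    fun i _ => (continuous_apply (A := fun _ : ℕ => ℕ) i).continuousAt
      ((isOpen_discrete {f i}).mem_nhds rfl)
  filter_upwards [hnear] with g hg
  have hstage : ballStage G f n = ballStage G g n := ballStage_congr fun i hi => (hg i hi).symm
  exact ⟨p.1, ⟨p, mem_iUnion.2 ⟨n, hstage ▸ hn⟩, rfl⟩, hpA⟩

lemma dense_hitSet (hG : ∀ x, {x} ∉ G) {A : Set X} (hAo : IsOpen A) (hAG : A ∈ G) :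
    Dense (hitSet G A) := by
  intro f
  choose k hkA hkfresh using fun n => exists_isFresh_decodeBall hG hAo hAG
    (finite_ballStage G f n) fun p => closedBall_notMem_of_mem_ballStage G f
  have hlim : Tendsto (fun n => Function.update f n (k n)) atTop (𝓝 f) :=
    tendsto_pi_nhds.2 fun i => tendsto_const_nhds.congr' <|
      (eventually_gt_atTop i).mono fun n hn => (Function.update_of_ne hn.ne _ _).symm
  refine mem_closure_of_tendsto hlim (Eventually.of_forall fun n => ?_)
  have hstage : ballStage G (Function.update f n (k n)) n = ballStage G f n :=
    ballStage_congr fun i hi => Function.update_of_ne hi.ne _ _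
  have hmem : decodeBall (k n) ∈ ballStage G (Function.update f n (k n)) (n + 1) := by
    rw [ballStage, hstage, Function.update_self, if_pos (hkfresh n)]
    exact mem_insert _ _
  exact ⟨_, ⟨_, mem_iUnion.2 ⟨n + 1, hmem⟩, rfl⟩, hkA n⟩

end GenericBalls

open GenericBalls in
theorem exists_isNowhereDense_inter_nonempty_of_lift_mk_lt_covMeager {X : Type*} [MetricSpace X]
    [SeparableSpace X] [PerfectSpace X] {G : Ultrafilter X} (hG : ∀ x, {x} ∉ G) {ι : Type v}
    {A : ι → Set X} (hAo : ∀ i, IsOpen (A i)) (hAG : ∀ i, A i ∈ G)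
    (hι : Cardinal.lift.{0} #ι < Cardinal.lift.{v} covMeager) :
    ∃ D : Set X, IsNowhereDense D ∧ ∀ i, (D ∩ A i).Nonempty := by
  have : Nonempty X := ⟨(G.nonempty_of_mem univ_mem).some⟩
  obtain ⟨f, hf⟩ := nonempty_iInter_of_lift_mk_lt_covMeager
    (fun i => residual_of_dense_open (isOpen_hitSet (A i)) (dense_hitSet hG (hAo i) (hAG i))) hι
  exact ⟨centers G f, (isDiscrete_centers G f).isNowhereDense, mem_iInter.1 hf⟩

theorem character_of_remote_ge_covMeager_general
    (X : Type u) [MetricSpace X] [SeparableSpace X]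
    (hcrowded : ∀ x : X, ¬ IsOpen ({x} : Set X))
    (F : Set (StoneCech X)) (hFne : F.Nonempty) (hFc : IsClosed F)
    (hFr : IsRemoteSet X F)
    (𝒰 : Set (Set (StoneCech X))) (h𝒰o : ∀ U ∈ 𝒰, IsOpen U)
    (h𝒰 : F = ⋂₀ 𝒰) :
    Cardinal.lift.{u} covMeager ≤ Cardinal.lift.{0} #𝒰 := by
  have : PerfectSpace X := perfectSpace_iff_forall_not_isolated.2 fun x =>
    ⟨(isOpen_singleton_iff_punctured_nhds x).not.1 (hcrowded x)⟩
  obtain ⟨p, hpF⟩ := hFne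
  have : Infinite 𝒰 := Set.infinite_coe_iff.2 fun hfin => by
    obtain ⟨x, hx⟩ :=
      denseRange_stoneCechUnit.exists_mem_open (h𝒰 ▸ hfin.isOpen_sInter h𝒰o) ⟨p, hpF⟩
    exact hFr.stoneCechUnit_notMem x hx
  obtain ⟨G, hG⟩ := denseRange_stoneCechUnit.exists_ultrafilter_tendsto p
  choose V hVo hFV hVU using fun U : 𝒰 =>
    normal_exists_closure_subset hFc (h𝒰o U U.2) (h𝒰 ▸ sInter_subset_of_mem U.2)
  have hVSo (S : Finset 𝒰) : IsOpen (⋂ U ∈ S, V U) := isOpen_biInter_finset fun U _ => hVo U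
  by_contra! hlt
  rw [← mk_finset_of_infinite] at hlt
  obtain ⟨D, hD, hDV⟩ := exists_isNowhereDense_inter_nonempty_of_lift_mk_lt_covMeager
    (fun x => hFr.notMem_of_tendsto hpF hG subsingleton_singleton.isDiscrete.isNowhereDense)
    (A := fun S => stoneCechUnit ⁻¹' ⋂ U ∈ S, V U)
    (fun S => (hVSo S).preimage continuous_stoneCechUnit)
    (fun S => hG ((hVSo S).mem_nhds (mem_iInter₂.2 fun U _ => hFV U hpF))) hlt
  obtain ⟨q, hqD, hqV⟩ :=
    closure_inter_iInter_closure_nonempty (D := stoneCechUnit '' D) (V := V) fun S =>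
      let ⟨x, hxD, hxV⟩ := hDV S; ⟨_, mem_image_of_mem _ hxD, hxV⟩
  have hqF : q ∈ F := h𝒰 ▸ mem_sInter.2 fun U hU => hVU ⟨U, hU⟩ (mem_iInter.1 hqV _)
  exact (hFr D hD).subset ⟨hqF, hqD⟩

/-- If `X` is a non-compact, crowded, separable metrizable space and `F` is a nonempty
closed remote subset of `βX`, then `χ(F) ≥ cov(M)`: every family of open subsets of
`βX` intersecting to `F` has cardinality at least `cov(M)`. -/
theorem character_of_remote_ge_covMeager
    (X : Type u) [MetricSpace X] [SeparableSpace X]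
    (hnc : ¬ CompactSpace X)
    (hcrowded : ∀ x : X, ¬ IsOpen ({x} : Set X))
    (F : Set (StoneCech X)) (hFne : F.Nonempty) (hFc : IsClosed F)
    (hFr : IsRemoteSet X F)
    (𝒰 : Set (Set (StoneCech X))) (h𝒰o : ∀ U ∈ 𝒰, IsOpen U)
    (h𝒰 : F = ⋂₀ 𝒰) :
    Cardinal.lift.{u} covMeager ≤ Cardinal.lift.{0} #𝒰 :=
  character_of_remote_ge_covMeager_general X hcrowded F hFne hFc hFr 𝒰 h𝒰o h𝒰
end

section
/- Let X be a non-compact, crowded, separable metrizable space and F a nonempty closed remote subset of βX. Then χ(F) ≥ min{non(M), d}. -/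
open TopologicalSpace Cardinal Filter

/-- The uniformity `non(M)` of the meager ideal on Baire space `ω^ω`: the least
cardinality of a non-meager subset of `ω^ω`. -/
noncomputable def nonMeager : Cardinal :=
  sInf { c | ∃ S : Set (ℕ → ℕ), ¬ IsMeagre S ∧ #S = c }

/-- The dominating number `d`: the least cardinality of a family cofinal in
`(ω^ω, ≤*)`. -/
noncomputable def domNumber : Cardinal :=
  sInf { c | ∃ D : Set (ℕ → ℕ), (∀ f : ℕ → ℕ, ∃ g ∈ D, ∀ᶠ n in atTop, f n ≤ g n) ∧
      #D = c }

universe u v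

open Set Topology

/-!
Fix `p ∈ F` and suppose `|𝒰| < 𝔡`. Since `X` is crowded and normal, every nonempty open set
contains a nonempty open `O` with `p ∉ cl_{βX} O` (of two points with disjoint closed
neighbourhoods, `p` misses the closure of one), so there is a countable π-base `O₀, O₁, …` of
such sets. For each neighbourhood `V` of `p` among the fewer than `𝔡` finite intersections of
closed shrinkings of members of `𝒰`, let `f_V(k)` index a point of a dense sequence `q` lying in
`V` and outside `O₀ ∪ … ∪ O_k`. These functions do not dominate, so one `g` satisfies
`f_V(k) ≤ g(k)` for some `k`, for every `V`. Then `N = {q n | n ≤ g k, q n ∉ O₀ ∪ … ∪ O_k}`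
meets each `O_m` in a finite set, hence is nowhere dense, yet meets every `V`; compactness of
`βX` gives a point of `cl N ∩ ⋂ 𝒰 ⊆ F`, contradicting remoteness.
-/

theorem mk_finset_le_max (α : Type u) : #(Finset α) ≤ max ℵ₀ #α := by
  classical exact (mk_le_of_surjective List.toFinset_surjective).trans (mk_list_le_max α)

section DominatingNumber

theorem domNumber_le_mk {D : Set (ℕ → ℕ)}
    (hD : ∀ f : ℕ → ℕ, ∃ g ∈ D, ∀ᶠ n in atTop, f n ≤ g n) : domNumber ≤ #D :=
  csInf_le' ⟨D, hD, rfl⟩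

theorem exists_forall_eventually_lt_of_countable {D : Set (ℕ → ℕ)} (hD : D.Countable) :
    ∃ f : ℕ → ℕ, ∀ g ∈ D, ∀ᶠ n in atTop, g n < f n := by
  rcases D.eq_empty_or_nonempty with rfl | hne
  · exact ⟨0, by simp⟩
  obtain ⟨e, rfl⟩ := hD.exists_eq_range hne
  refine ⟨fun n => (Finset.range (n + 1)).sup (fun j => e j n) + 1, ?_⟩
  rintro - ⟨j, rfl⟩
  filter_upwards [eventually_ge_atTop j] with n hn
  exact Nat.lt_succ_of_le
    (Finset.le_sup (f := fun j => e j n) (Finset.mem_range.2 (Nat.lt_succ_of_le hn)))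

theorem aleph0_lt_domNumber : ℵ₀ < domNumber := by
  obtain ⟨D, hD, hcard⟩ : domNumber ∈ {c | ∃ D : Set (ℕ → ℕ),
      (∀ f : ℕ → ℕ, ∃ g ∈ D, ∀ᶠ n in atTop, f n ≤ g n) ∧ #D = c} :=
    csInf_mem ⟨_, univ, fun f => ⟨f, trivial, .of_forall fun _ => le_rfl⟩, rfl⟩
  refine lt_of_not_ge fun hle => ?_
  obtain ⟨f, hf⟩ :=
    exists_forall_eventually_lt_of_countable (le_aleph0_iff_set_countable.1 (hcard ▸ hle))
  obtain ⟨g, hgD, hfg⟩ := hD f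
  obtain ⟨n, hle, hlt⟩ := (hfg.and (hf g hgD)).exists
  exact hle.not_gt hlt

theorem exists_frequently_lt_of_lift_mk_lt_domNumber {ι : Type v} (f : ι → ℕ → ℕ)
    (hι : lift.{0} #ι < lift.{v} domNumber) :
    ∃ g : ℕ → ℕ, ∀ i, ∃ᶠ n in atTop, f i n < g n := by
  by_contra! h
  have hdom : domNumber ≤ #(range f) := domNumber_le_mk fun g => by
    obtain ⟨i, hi⟩ := h g
    exact ⟨f i, mem_range_self i, hi⟩
  exact ((lift_le.2 hdom).trans mk_range_le_lift).not_gt hι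

end DominatingNumber

section StoneCech

variable {X : Type u} [TopologicalSpace X]

theorem disjoint_closure_image_stoneCechUnit [NormalSpace X] {A B : Set X} (hA : IsClosed A)
    (hB : IsClosed B) (hAB : Disjoint A B) :
    Disjoint (closure (stoneCechUnit '' A)) (closure (stoneCechUnit '' B)) := by
  obtain ⟨f, hfA, hfB, hf01⟩ := exists_continuous_zero_one_of_isClosed hA hB hAB
  have hf : Continuous fun x => (⟨f x, hf01 x⟩ : unitInterval) := f.continuous.subtype_mk _
  have hφ := continuous_stoneCechExtend hf
  have h0 : closure (stoneCechUnit '' A) ⊆ stoneCechExtend hf ⁻¹' {0} := by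
    refine closure_minimal ?_ (isClosed_singleton.preimage hφ)
    rintro - ⟨x, hx, rfl⟩
    exact (stoneCechExtend_stoneCechUnit hf x).trans (Subtype.ext (hfA hx))
  have h1 : closure (stoneCechUnit '' B) ⊆ stoneCechExtend hf ⁻¹' {1} := by
    refine closure_minimal ?_ (isClosed_singleton.preimage hφ)
    rintro - ⟨x, hx, rfl⟩
    exact (stoneCechExtend_stoneCechUnit hf x).trans (Subtype.ext (hfB hx))
  exact ((disjoint_singleton.2 zero_ne_one).preimage _).mono h0 h1

theorem exists_isOpen_subset_notMem_closure_image_stoneCechUnit [T4Space X] [PerfectSpace X]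
    (p : StoneCech X) {U : Set X} (hU : IsOpen U) (hUne : U.Nonempty) :
    ∃ O, IsOpen O ∧ O.Nonempty ∧ O ⊆ U ∧ p ∉ closure (stoneCechUnit '' O) := by
  obtain ⟨x, hx⟩ := hUne
  obtain ⟨y, hy, hyx⟩ := (infinite_of_mem_nhds x (hU.mem_nhds hx)).nontrivial.exists_ne x
  obtain ⟨V, ⟨hVx, hVc⟩, W, ⟨hWy, hWc⟩, hVW⟩ :=
    ((closed_nhds_basis x).disjoint_iff (closed_nhds_basis y)).1 (disjoint_nhds_nhds.2 hyx.symm)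
  have shrink : ∀ z ∈ U, ∀ C ∈ 𝓝 z, p ∉ closure (stoneCechUnit '' C) →
      ∃ O, IsOpen O ∧ O.Nonempty ∧ O ⊆ U ∧ p ∉ closure (stoneCechUnit '' O) :=
    fun z hz C hC hpC => ⟨interior (U ∩ C), isOpen_interior,
      ⟨z, mem_interior_iff_mem_nhds.2 (inter_mem (hU.mem_nhds hz) hC)⟩,
      interior_subset.trans inter_subset_left,
      fun h => hpC (closure_mono (image_mono (interior_subset.trans inter_subset_right)) h)⟩
  by_cases hpV : p ∈ closure (stoneCechUnit '' V)
  · exact shrink y hy W hWy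
      ((disjoint_closure_image_stoneCechUnit hVc hWc hVW).notMem_of_mem_left hpV)
  · exact shrink x hx V hVx hpV

theorem exists_seq_notMem_closure_image_stoneCechUnit [T4Space X] [PerfectSpace X]
    [SecondCountableTopology X] (p : StoneCech X) :
    ∃ O : ℕ → Set X, (∀ m, IsOpen (O m) ∧ (O m).Nonempty ∧ p ∉ closure (stoneCechUnit '' O m)) ∧
      ∀ U, IsOpen U → U.Nonempty → ∃ m, O m ⊆ U := by
  have : Nonempty X := denseRange_stoneCechUnit.nonempty_iff.2 ⟨p⟩
  obtain ⟨b, hbc, hb, hbasis⟩ := exists_countable_basis X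
  obtain ⟨B, rfl⟩ := hbc.exists_eq_range (.of_sUnion_eq_univ hbasis.sUnion_eq)
  have hO : ∀ m, ∃ O, IsOpen O ∧ O.Nonempty ∧ O ⊆ B m ∧ p ∉ closure (stoneCechUnit '' O) :=
    fun m => exists_isOpen_subset_notMem_closure_image_stoneCechUnit p
      (hbasis.isOpen (mem_range_self m))
      (nonempty_iff_ne_empty.2 fun h => hb (h ▸ mem_range_self m))
  choose O hOo hOne hOB hOp using hO
  refine ⟨O, fun m => ⟨hOo m, hOne m, hOp m⟩, fun U hU ⟨x, hx⟩ => ?_⟩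
  obtain ⟨-, ⟨m, rfl⟩, -, hmU⟩ := hbasis.exists_subset_of_mem_open hx hU
  exact ⟨m, (hOB m).trans hmU⟩

end StoneCech

theorem finite_setOf_exists_le_forall_notMem_inter {α : Type*} (O : ℕ → Set α) (q : ℕ → α)
    (g : ℕ → ℕ) (m : ℕ) :
    ({x | ∃ k, ∃ n ≤ g k, q n = x ∧ ∀ j ≤ k, x ∉ O j} ∩ O m).Finite := by
  refine ((finite_Iic ((Finset.range m).sup g)).image q).subset ?_
  rintro - ⟨⟨k, n, hn, rfl, hk⟩, hm⟩
  have hkm : k < m := lt_of_not_ge fun h => hk m h hm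
  exact ⟨n, hn.trans (Finset.le_sup (Finset.mem_range.2 hkm)), rfl⟩

theorem isNowhereDense_of_forall_finite_inter {X : Type*} [TopologicalSpace X] [T1Space X]
    [PerfectSpace X] {ι : Type*} {O : ι → Set X} (hOo : ∀ i, IsOpen (O i))
    (hOne : ∀ i, (O i).Nonempty) (hO : ∀ U, IsOpen U → U.Nonempty → ∃ i, O i ⊆ U) {N : Set X}
    (hN : ∀ i, (N ∩ O i).Finite) : IsNowhereDense N := by
  rw [IsNowhereDense, ← not_nonempty_iff_eq_empty]
  intro hne
  obtain ⟨i, hi⟩ := hO _ isOpen_interior hne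
  obtain ⟨x, hx⟩ := hOne i
  obtain ⟨z, hzO, hzN⟩ := ((infinite_of_mem_nhds x ((hOo i).mem_nhds hx)).sdiff (hN i)).nonempty
  obtain ⟨w, ⟨hwO, hwN'⟩, hwN⟩ := mem_closure_iff.1 (interior_subset (hi hzO)) _
    ((hOo i).sdiff (hN i).isClosed) ⟨hzO, hzN⟩
  exact hwN' ⟨hwN, hwO⟩

section Remote

variable {X : Type u} [TopologicalSpace X] [T4Space X] [PerfectSpace X] [SecondCountableTopology X]

theorem exists_isNowhereDense_forall_exists_mem {p : StoneCech X} {ι : Type v}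
    (V : ι → Set (StoneCech X)) (hV : ∀ i, V i ∈ 𝓝 p)
    (hι : lift.{0} #ι < lift.{v} domNumber) :
    ∃ N : Set X, IsNowhereDense N ∧ ∀ i, ∃ x ∈ N, stoneCechUnit x ∈ V i := by
  have : Nonempty X := denseRange_stoneCechUnit.nonempty_iff.2 ⟨p⟩
  obtain ⟨q, hq⟩ := exists_dense_seq X
  have hdense : DenseRange (stoneCechUnit ∘ q) :=
    denseRange_stoneCechUnit.comp hq continuous_stoneCechUnit
  obtain ⟨O, hO, hOU⟩ := exists_seq_notMem_closure_image_stoneCechUnit p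
  have hR : ∀ k, ∀ᶠ z in 𝓝 p, ∀ j ∈ Iic k, z ∉ closure (stoneCechUnit '' O j) := fun k =>
    (eventually_all_finite (finite_Iic k)).2 fun j _ =>
      isClosed_closure.isOpen_compl.mem_nhds (hO j).2.2
  have hf : ∀ i k, ∃ n, stoneCechUnit (q n) ∈ V i ∧ ∀ j ≤ k, q n ∉ O j := by
    intro i k
    obtain ⟨-, ⟨hnV, hnO⟩, n, rfl⟩ :=
      mem_closure_iff_nhds.1 (hdense p) _ (Filter.Eventually.and (hV i) (hR k))
    exact ⟨n, hnV, fun j hj hqO => hnO j hj (subset_closure (mem_image_of_mem _ hqO))⟩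
  choose f hfV hfO using hf
  obtain ⟨g, hg⟩ := exists_frequently_lt_of_lift_mk_lt_domNumber f hι
  refine ⟨{x | ∃ k, ∃ n ≤ g k, q n = x ∧ ∀ j ≤ k, x ∉ O j},
    isNowhereDense_of_forall_finite_inter (fun m => (hO m).1) (fun m => (hO m).2.1) hOU
      (finite_setOf_exists_le_forall_notMem_inter O q g), fun i => ?_⟩
  obtain ⟨k, hk⟩ := (hg i).exists
  exact ⟨q (f i k), ⟨k, f i k, hk.le, rfl, hfO i k⟩, hfV i k⟩

theorem lift_domNumber_le_mk_of_isRemoteSet {F : Set (StoneCech X)} (hF : IsRemoteSet X F)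
    {p : StoneCech X} {𝒰 : Set (Set (StoneCech X))} (hp : ∀ U ∈ 𝒰, U ∈ 𝓝 p)
    (h𝒰 : ⋂₀ 𝒰 ⊆ F) : lift.{u} domNumber ≤ lift.{0} #𝒰 := by
  by_contra! h𝒰d
  have hfin : lift.{0} #(Finset 𝒰) < lift.{u} domNumber := by
    rw [lift_uzero] at h𝒰d ⊢
    exact (mk_finset_le_max 𝒰).trans_lt (max_lt (aleph0_lt_lift.2 aleph0_lt_domNumber) h𝒰d)
  choose C hCp hCc hCU using fun U : 𝒰 => exists_mem_nhds_isClosed_subset (hp U U.2)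
  obtain ⟨N, hN, hNC⟩ := exists_isNowhereDense_forall_exists_mem (fun u : Finset 𝒰 => ⋂ U ∈ u, C U)
    (fun u => (biInter_finset_mem u).2 fun U _ => hCp U) hfin
  obtain ⟨y, hyN, hyC⟩ := isClosed_closure.isCompact.inter_iInter_nonempty C hCc fun u =>
    let ⟨x, hxN, hxC⟩ := hNC u
    ⟨stoneCechUnit x, subset_closure (mem_image_of_mem _ hxN), hxC⟩
  have hyF : y ∈ F := h𝒰 (mem_sInter.2 fun U hU => hCU ⟨U, hU⟩ (mem_iInter.1 hyC ⟨U, hU⟩))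
  exact (hF N hN).subset ⟨hyF, hyN⟩

end Remote

theorem character_of_remote_ge_min_nonMeager_domNumber_general
    (X : Type u) [MetricSpace X] [SeparableSpace X]
    (hcrowded : ∀ x : X, ¬ IsOpen ({x} : Set X))
    (F : Set (StoneCech X)) (hFne : F.Nonempty)
    (hFr : IsRemoteSet X F)
    (𝒰 : Set (Set (StoneCech X))) (h𝒰o : ∀ U ∈ 𝒰, IsOpen U)
    (h𝒰 : F = ⋂₀ 𝒰) :
    Cardinal.lift.{u} (min nonMeager domNumber) ≤ Cardinal.lift.{0} #𝒰 := by
  have : PerfectSpace X := perfectSpace_iff_forall_not_isolated.2 fun x =>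
    ⟨fun h => hcrowded x ((isOpen_singleton_iff_punctured_nhds x).2 h)⟩
  obtain ⟨p, hp⟩ := hFne
  have hp𝒰 : ∀ U ∈ 𝒰, U ∈ 𝓝 p := fun U hU => (h𝒰o U hU).mem_nhds (mem_sInter.1 (h𝒰 ▸ hp) U hU)
  exact (lift_le.2 (min_le_right _ _)).trans (lift_domNumber_le_mk_of_isRemoteSet hFr hp𝒰 h𝒰.ge)

/-- If `X` is a non-compact, crowded, separable metrizable space and `F` is a nonempty
closed remote subset of `βX`, then `χ(F) ≥ min{non(M), d}`: every family of open
subsets of `βX` intersecting to `F` has cardinality at least `min{non(M), d}`. -/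
theorem character_of_remote_ge_min_nonMeager_domNumber
    (X : Type u) [MetricSpace X] [SeparableSpace X]
    (hnc : ¬ CompactSpace X)
    (hcrowded : ∀ x : X, ¬ IsOpen ({x} : Set X))
    (F : Set (StoneCech X)) (hFne : F.Nonempty) (hFc : IsClosed F)
    (hFr : IsRemoteSet X F)
    (𝒰 : Set (Set (StoneCech X))) (h𝒰o : ∀ U ∈ 𝒰, IsOpen U)
    (h𝒰 : F = ⋂₀ 𝒰) :
    Cardinal.lift.{u} (min nonMeager domNumber) ≤ Cardinal.lift.{0} #𝒰 :=
  character_of_remote_ge_min_nonMeager_domNumber_general X hcrowded F hFne hFr 𝒰 h𝒰o h𝒰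
end

section
/- For every nowhere dense subset N of the Cantor space 2^ω, there exist p ∈ 2^ω and a strictly increasing j : ω → ω with j(0) = 0 such that N ∩ U(p,j) = ∅, where U(p,j) is the set of q ∈ 2^ω agreeing with p on some block [j(n), j(n+1)). -/
/-! The complement `D` of `closure N` is open and dense. Overwriting the first `a` coordinates in
each of the finitely many possible ways gives finitely many open dense preimages of `D`; a point
`e` of their intersection has a cylinder neighbourhood of some length `b` inside it, so every `q`
that agrees with `e` on `[a, b)` lies in `D`. Iterating this from `a = 0` yields the blocks `j`,
and `p` is the concatenation of the chosen `e`'s along them. -/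

/-- For `p ∈ 2^ω` and `j : ω → ω`, `blockSet p j` is the set of `q ∈ 2^ω` agreeing with
`p` on some block `[j n, j (n+1))`. -/
def blockSet (p : ℕ → Bool) (j : ℕ → ℕ) : Set (ℕ → Bool) :=
  { q | ∃ n : ℕ, ∀ k : ℕ, j n ≤ k → k < j (n + 1) → q k = p k }

open Set PiNat

variable {X : Type*} {a : ℕ}

lemma StrictMono.exists_eqOn_blocks {j : ℕ → ℕ} (hj : StrictMono j) (e : ℕ → ℕ → X) :
    ∃ p : ℕ → X, ∀ n, EqOn p (e n) (Ico (j n) (j (n + 1))) := by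
  classical
  refine ⟨fun k => e (Nat.findGreatest (fun m => j m ≤ k) k) k, fun n k ⟨hnk, hkn⟩ => ?_⟩
  have : Nat.findGreatest (fun m => j m ≤ k) k = n := by
    refine Nat.findGreatest_eq_iff.mpr ⟨(hj.id_le n).trans hnk, fun _ => hnk, fun m hm _ hmk => ?_⟩
    exact hkn.not_ge ((hj.monotone hm).trans hmk)
  simp only [this]

def splice (s : Fin a → X) (x : ℕ → X) : ℕ → X :=
  fun k => if h : k < a then s ⟨k, h⟩ else x k

@[simp]
lemma splice_splice (s s' : Fin a → X) (x : ℕ → X) : splice s (splice s' x) = splice s x := by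
  funext k
  by_cases h : k < a <;> simp [splice, h]

@[simp]
lemma splice_restrict_self (x : ℕ → X) : splice (fun i : Fin a => x i) x = x := by
  funext k
  by_cases h : k < a <;> simp [splice, h]

lemma splice_eq_self_of_mem_cylinder {s : Fin a → X} {y z : ℕ → X}
    (hz : z ∈ cylinder (splice s y) a) : splice s z = z := by
  funext k
  by_cases h : k < a
  · simp [splice, h, hz k h]
  · simp [splice, h]

lemma splice_mem_cylinder {x q : ℕ → X} {b : ℕ} (hq : EqOn q x (Ico a b)) :
    splice (fun i : Fin a => x i) q ∈ cylinder x b := by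
  intro k hk
  by_cases h : k < a
  · simp [splice, h]
  · simpa [splice, h] using hq ⟨not_lt.mp h, hk⟩

variable [TopologicalSpace X]

lemma continuous_splice (s : Fin a → X) : Continuous (splice s) :=
  continuous_pi fun k => by
    by_cases h : k < a
    · simp only [splice, h, dite_true]; exact continuous_const
    · simp only [splice, h, dite_false]; exact continuous_apply k

variable [DiscreteTopology X]

lemma IsOpen.exists_cylinder_subset {D : Set (ℕ → X)} (hD : IsOpen D) {x : ℕ → X}
    (hx : x ∈ D) : ∃ n, cylinder x n ⊆ D := by
  obtain ⟨_, ⟨y, n, rfl⟩, hxy, hyD⟩ :=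
    (isTopologicalBasis_cylinders fun _ => X).exists_subset_of_mem_open hx hD
  exact ⟨n, (mem_cylinder_iff_eq.mp hxy).symm ▸ hyD⟩

lemma Dense.preimage_splice {D : Set (ℕ → X)} (hD : Dense D) (s : Fin a → X) :
    Dense (splice s ⁻¹' D) := by
  refine dense_iff_inter_open.mpr fun U hU ⟨u, hu⟩ => ?_
  set u' : Fin a → X := fun i => u i
  have hV : IsOpen (splice u' ⁻¹' U ∩ cylinder (splice s u) a) :=
    (hU.preimage (continuous_splice u')).inter (isOpen_cylinder _ _ _)
  obtain ⟨z, ⟨hzU, hzC⟩, hzD⟩ :=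
    hD.inter_open_nonempty _ hV ⟨splice s u, by simpa [u'] using hu, self_mem_cylinder _ _⟩
  refine ⟨splice u' z, hzU, ?_⟩
  simpa [splice_eq_self_of_mem_cylinder hzC] using hzD

lemma Dense.exists_block_subset [Finite X] [Nonempty X] {D : Set (ℕ → X)} (hO : IsOpen D)
    (hD : Dense D) (a : ℕ) :
    ∃ (e : ℕ → X) (b : ℕ), a < b ∧ {q | EqOn q e (Ico a b)} ⊆ D := by
  set D' := ⋂ s : Fin a → X, splice s ⁻¹' D
  have hO' : IsOpen D' := isOpen_iInter_of_finite fun s => hO.preimage (continuous_splice s)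
  have hD' : Dense D' := by
    simpa only [sInter_range] using
      (finite_range _).dense_sInter (forall_mem_range.2 fun s => hO.preimage (continuous_splice s))
        (forall_mem_range.2 hD.preimage_splice)
  obtain ⟨x, hx⟩ := hD'.nonempty
  obtain ⟨b, hb⟩ := hO'.exists_cylinder_subset hx
  refine ⟨x, max b (a + 1), by omega, fun q (hq : EqOn q x _) => ?_⟩
  have hmem : splice (fun i : Fin a => x i) q ∈ D' :=
    hb <| splice_mem_cylinder <| hq.mono <| Ico_subset_Ico_right (le_max_left _ _)
  simpa using mem_iInter.mp hmem fun i : Fin a => q i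

/-- For every nowhere dense subset `N` of Cantor space `2^ω` there are `p ∈ 2^ω` and a
strictly increasing `j : ω → ω` with `j 0 = 0` such that `N ∩ U(p,j) = ∅`. -/
theorem nowhereDense_avoids_blockSet (N : Set (ℕ → Bool))
    (hN : interior (closure N) = ∅) :
    ∃ (p : ℕ → Bool) (j : ℕ → ℕ), StrictMono j ∧ j 0 = 0 ∧ N ∩ blockSet p j = ∅ := by
  have hO : IsOpen (closure N)ᶜ := isClosed_closure.isOpen_compl
  have hD : Dense (closure N)ᶜ := interior_eq_empty_iff_dense_compl.mp hN
  choose e b hab hforce using hD.exists_block_subset hO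
  let j : ℕ → ℕ := fun n => Nat.rec 0 (fun _ m => b m) n
  have hj : StrictMono j := strictMono_nat_of_lt_succ fun n => hab (j n)
  obtain ⟨p, hp⟩ := hj.exists_eqOn_blocks fun n => e (j n)
  refine ⟨p, j, hj, rfl, eq_empty_iff_forall_notMem.mpr fun q ⟨hqN, n, hqp⟩ => ?_⟩
  have hqe : EqOn q (e (j n)) (Ico (j n) (j (n + 1))) :=
    fun k hk => (hqp k hk.1 hk.2).trans (hp n hk)
  exact hforce (j n) hqe (subset_closure hqN)
end

section
/- Every forcing with the Sacks property is ω^ω-bounding implies the block-covering fact: if P has the Sacks property, p forces ẋ ∈ 2^ω and ḟ ∈ ω^ω strictly increasing with ḟ(0)=0, then there exist q ≤ p, a ground-model y ∈ 2^ω, and a ground-model strictly increasing g ∈ ω^ω with g(0)=0 such that q forces U(y,g) ⊆ U(ẋ,ḟ). -/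
/-- An abstract forcing notion: a preordered set of conditions together with a class of
generic filters; names for objects of the extension are interpreted as functions on
generic filters, and `p ⊩ φ(ȧ)` is rendered as "for every generic `G` containing `p`,
`φ` holds of the evaluation of `ȧ` at `G`". -/
structure ForcingNotion where
  P : Type
  le : P → P → Prop
  le_refl : ∀ p, le p p
  le_trans : ∀ {p q r}, le p q → le q r → le p r
  Generic : Set (Set P)
  generic_upward : ∀ G ∈ Generic, ∀ p ∈ G, ∀ q, le p q → q ∈ G
  generic_exists : ∀ p : P, ∃ G ∈ Generic, p ∈ G

/-- `P` has the Sacks property. -/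
def SacksProperty (𝔽 : ForcingNotion) : Prop :=
  ∀ (f : {G // G ∈ 𝔽.Generic} → ℕ → ℕ) (p : 𝔽.P),
    ∃ (F : ℕ → Finset ℕ) (q : 𝔽.P), 𝔽.le q p ∧ (∀ n, (F n).card ≤ 2 ^ n) ∧
      ∀ G : {G // G ∈ 𝔽.Generic}, q ∈ G.1 → ∀ n, f G n ∈ F n

/-! The Sacks property bounds `ḟ` by a ground-model `h`, so for every `a` the interval
`[a, h (a + 1) + a + 1)` contains the whole `ḟ`-block `[ḟ a, ḟ (a + 1))`. Cut `ω` into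
consecutive cells of this shape and group them into blocks, the `n`-th block consisting of
`2 ^ n` cells; this is `g`. A second use of the Sacks property covers `ẋ ↾ g (n + 1)` by at most
`2 ^ n` ground-model guesses, and `y` copies the `i`-th guess on the `i`-th cell of block `n`.
If `z` agrees with `y` on block `n`, it agrees with `ẋ` on the cell of the correct guess, hence
on the `ḟ`-block inside that cell. -/

namespace ForcingNotion

variable {𝔽 : ForcingNotion}

lemma mem_of_le {G : {G // G ∈ 𝔽.Generic}} {p q : 𝔽.P} (hq : q ∈ G.1) (hqp : 𝔽.le q p) :
    p ∈ G.1 :=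
  𝔽.generic_upward G.1 G.2 q hq p hqp

end ForcingNotion

namespace SacksProperty

variable {𝔽 : ForcingNotion}

lemma exists_bound (hS : SacksProperty 𝔽) (f : {G // G ∈ 𝔽.Generic} → ℕ → ℕ) (p : 𝔽.P) :
    ∃ (h : ℕ → ℕ) (q : 𝔽.P), 𝔽.le q p ∧
      ∀ G : {G // G ∈ 𝔽.Generic}, q ∈ G.1 → ∀ n, f G n ≤ h n := by
  obtain ⟨F, q, hqp, -, hF⟩ := hS f p
  exact ⟨fun n => (F n).sup id, q, hqp, fun G hG n => Finset.le_sup (f := id) (hF G hG n)⟩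

lemma exists_finset_cover {α : Type*} [Encodable α] (hS : SacksProperty 𝔽)
    (c : {G // G ∈ 𝔽.Generic} → ℕ → α) (p : 𝔽.P) :
    ∃ (F : ℕ → Finset α) (q : 𝔽.P), 𝔽.le q p ∧ (∀ n, (F n).card ≤ 2 ^ n) ∧
      ∀ G : {G // G ∈ 𝔽.Generic}, q ∈ G.1 → ∀ n, c G n ∈ F n := by
  obtain ⟨F, q, hqp, hcard, hF⟩ := hS (fun G n => Encodable.encode (c G n)) p
  have hinj := Encodable.encode_injective (α := α)
  refine ⟨fun n => (F n).preimage Encodable.encode hinj.injOn, q, hqp, fun n => ?_,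
    fun G hG n => Finset.mem_preimage.2 (hF G hG n)⟩
  calc ((F n).preimage Encodable.encode hinj.injOn).card ≤ (F n).card :=
        Finset.card_le_card_of_injOn _ (fun a ha => Finset.mem_preimage.1 ha) hinj.injOn
    _ ≤ 2 ^ n := hcard n

end SacksProperty

namespace SacksCovering

/-- Cell `m` is `[cellStart h m, cellStart h (m + 1))`. -/
def cellStart (h : ℕ → ℕ) (m : ℕ) : ℕ :=
  (fun a => h (a + 1) + a + 1)^[m] 0

/-- Block `n` is the union of the cells `2 ^ n - 1 ≤ m < 2 ^ (n + 1) - 1`. -/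
def blockStart (h : ℕ → ℕ) (n : ℕ) : ℕ :=
  cellStart h (2 ^ n - 1)

variable (h : ℕ → ℕ)

lemma cellStart_succ (m : ℕ) : cellStart h (m + 1) = h (cellStart h m + 1) + cellStart h m + 1 :=
  Function.iterate_succ_apply' _ _ _

lemma strictMono_cellStart : StrictMono (cellStart h) :=
  strictMono_nat_of_lt_succ fun m => by rw [cellStart_succ]; omega

lemma strictMono_blockStart : StrictMono (blockStart h) :=
  (strictMono_cellStart h).comp fun a b hab => by
    have := Nat.pow_lt_pow_right (le_refl 2) hab
    have := Nat.one_le_two_pow (n := a)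
    omega

lemma blockStart_zero : blockStart h 0 = 0 := rfl

lemma exists_lt_cellStart_succ (k : ℕ) : ∃ m, k < cellStart h (m + 1) :=
  ⟨k, Nat.lt_succ_self k |>.trans_le (strictMono_cellStart h).le_apply⟩

def cellIndex (k : ℕ) : ℕ :=
  Nat.find (exists_lt_cellStart_succ h k)

lemma cellIndex_eq {m k : ℕ} (hmk : cellStart h m ≤ k) (hkm : k < cellStart h (m + 1)) :
    cellIndex h k = m := by
  refine (Nat.find_eq_iff _).2 ⟨hkm, fun l hlm hkl => ?_⟩
  have := (strictMono_cellStart h).monotone (show l + 1 ≤ m by omega)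
  omega

lemma blockStart_le_cellStart (n i : ℕ) :
    blockStart h n ≤ cellStart h (2 ^ n - 1 + i) :=
  (strictMono_cellStart h).monotone (Nat.le_add_right _ _)

lemma cellStart_succ_le_blockStart {n i : ℕ} (hi : i < 2 ^ n) :
    cellStart h (2 ^ n - 1 + i + 1) ≤ blockStart h (n + 1) :=
  (strictMono_cellStart h).monotone (by rw [pow_succ]; omega)

lemma mem_cell_of_mem_block {f : ℕ → ℕ} (hf : StrictMono f) (hfh : ∀ n, f n ≤ h n) {a k : ℕ}
    (hak : f a ≤ k) (hka : k < f (a + 1)) : a ≤ k ∧ k < h (a + 1) + a + 1 :=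
  ⟨hf.le_apply.trans hak, hka.trans_le (hfh (a + 1)) |>.trans_le (by omega)⟩

variable {h}

noncomputable def cellGuess (F : ℕ → Finset (List Bool)) (m : ℕ) : List Bool :=
  (F (Nat.log 2 (m + 1))).toList.getD (m + 1 - 2 ^ Nat.log 2 (m + 1)) []

lemma cellGuess_eq (F : ℕ → Finset (List Bool)) {n i : ℕ} (hi : i < 2 ^ n) :
    cellGuess F (2 ^ n - 1 + i) = (F n).toList.getD i [] := by
  have hpos := Nat.one_le_two_pow (n := n)
  have hlog : Nat.log 2 (2 ^ n - 1 + i + 1) = n :=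
    Nat.log_eq_of_pow_le_of_lt_pow (by omega) (by rw [pow_succ]; omega)
  rw [cellGuess, hlog]
  congr 1
  omega

lemma exists_cellGuess_eq {F : ℕ → Finset (List Bool)} {n : ℕ} (hF : (F n).card ≤ 2 ^ n)
    {L : List Bool} (hL : L ∈ F n) : ∃ i < 2 ^ n, cellGuess F (2 ^ n - 1 + i) = L := by
  have hidx : (F n).toList.idxOf L < (F n).toList.length :=
    List.idxOf_lt_length_iff.2 (Finset.mem_toList.2 hL)
  have hi : (F n).toList.idxOf L < 2 ^ n := hidx.trans_le ((Finset.length_toList _).trans_le hF)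
  refine ⟨_, hi, ?_⟩
  rw [cellGuess_eq F hi, List.getD_eq_getElem _ _ hidx, List.getElem_idxOf]

variable (h) in
noncomputable def guessReal (F : ℕ → Finset (List Bool)) (k : ℕ) : Bool :=
  (cellGuess F (cellIndex h k)).getD k false

lemma blockSet_guessReal_subset {f : ℕ → ℕ} (hf : StrictMono f) (hfh : ∀ n, f n ≤ h n)
    {F : ℕ → Finset (List Bool)} (hF : ∀ n, (F n).card ≤ 2 ^ n) {x : ℕ → Bool}
    (hx : ∀ n, (List.range (blockStart h (n + 1))).map x ∈ F n) :
    blockSet (guessReal h F) (blockStart h) ⊆ blockSet x f := by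
  rintro z ⟨n, hzy⟩
  obtain ⟨i, hi, hguess⟩ := exists_cellGuess_eq (hF n) (hx n)
  set m := 2 ^ n - 1 + i
  refine ⟨cellStart h m, fun k hk₁ hk₂ => ?_⟩
  obtain ⟨hmk, hkm⟩ := mem_cell_of_mem_block h hf hfh hk₁ hk₂
  rw [← cellStart_succ] at hkm
  have hkn : k < blockStart h (n + 1) := hkm.trans_le (cellStart_succ_le_blockStart h hi)
  rw [hzy k ((blockStart_le_cellStart h n i).trans hmk) hkn, guessReal, cellIndex_eq h hmk hkm,
    hguess, List.getD_eq_getElem _ _ (by simpa using hkn)]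
  simp

end SacksCovering

open SacksCovering in
/-- If `P` has the Sacks property, `p` forces `ẋ ∈ 2^ω` and `ḟ ∈ ω^ω` strictly
increasing with `ḟ(0) = 0`, then there are `q ≤ p`, a ground-model `y ∈ 2^ω` and a
ground-model strictly increasing `g` with `g 0 = 0` such that `q ⊩ U(y,g) ⊆ U(ẋ,ḟ)`. -/
theorem sacks_block_covering (𝔽 : ForcingNotion) (hS : SacksProperty 𝔽)
    (x : {G // G ∈ 𝔽.Generic} → ℕ → Bool)
    (f : {G // G ∈ 𝔽.Generic} → ℕ → ℕ)
    (p : 𝔽.P)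
    (hf : ∀ G : {G // G ∈ 𝔽.Generic}, p ∈ G.1 → StrictMono (f G) ∧ f G 0 = 0) :
    ∃ (q : 𝔽.P) (y : ℕ → Bool) (g : ℕ → ℕ), 𝔽.le q p ∧ StrictMono g ∧ g 0 = 0 ∧
      ∀ G : {G // G ∈ 𝔽.Generic}, q ∈ G.1 →
        blockSet y g ⊆ blockSet (x G) (f G) := by
  obtain ⟨h, q₁, hq₁p, hbound⟩ := hS.exists_bound f p
  obtain ⟨F, q, hqq₁, hcard, hcover⟩ :=
    hS.exists_finset_cover (fun G n => (List.range (blockStart h (n + 1))).map (x G)) q₁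
  refine ⟨q, guessReal h F, blockStart h, 𝔽.le_trans hqq₁ hq₁p, strictMono_blockStart h,
    blockStart_zero h, fun G hG => ?_⟩
  have hG₁ := ForcingNotion.mem_of_le hG hqq₁
  exact blockSet_guessReal_subset (hf G (ForcingNotion.mem_of_le hG₁ hq₁p)).1 (hbound G hG₁)
    hcard (hcover G hG)
end

section
/- If F is a remote filter of clopen subsets of ω × 2^ω in the ground model and P is a nwd-bounding forcing notion, then F remains a remote filter of clopen subsets of ω × 2^ω in the generic extension: it is forced that every nowhere dense subset of ω × 2^ω is disjoint from some member of F. -/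
/-- `P` is nwd-bounding (for the space `ω × 2^ω`): for every condition `p` and every
name `Ṅ` for a nowhere dense subset of `ω × 2^ω`, there are a ground-model closed
nowhere dense set `M` and `q ≤ p` forcing `Ṅ ⊆ M`. -/
def NwdBounding (𝔽 : ForcingNotion) : Prop :=
  ∀ (A : {G // G ∈ 𝔽.Generic} → Set (ℕ × (ℕ → Bool))) (p : 𝔽.P),
    (∀ G : {G // G ∈ 𝔽.Generic}, p ∈ G.1 → interior (closure (A G)) = ∅) →
    ∃ M : Set (ℕ × (ℕ → Bool)), IsClosed M ∧ interior M = ∅ ∧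
      ∃ q : 𝔽.P, 𝔽.le q p ∧ ∀ G : {G // G ∈ 𝔽.Generic}, q ∈ G.1 → A G ⊆ M

/-- A filter `F` of clopen subsets of `ω × 2^ω` is remote if every nowhere dense subset
of `ω × 2^ω` is disjoint from some member of `F`. -/
def IsRemoteClopenFilter (F : Set (Set (ℕ × (ℕ → Bool)))) : Prop :=
  (∀ U ∈ F, IsClopen U) ∧ (∅ ∉ F) ∧
  (∀ U ∈ F, ∀ V ∈ F, ∃ W ∈ F, W ⊆ U ∩ V) ∧
  (∀ N : Set (ℕ × (ℕ → Bool)), interior (closure N) = ∅ → ∃ U ∈ F, U ∩ N = ∅)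

theorem IsRemoteClopenFilter.exists_disjoint_of_subset_closed_nowhereDense
    {F : Set (Set (ℕ × (ℕ → Bool)))} (hF : IsRemoteClopenFilter F)
    {M : Set (ℕ × (ℕ → Bool))} (hMc : IsClosed M) (hMi : interior M = ∅) :
    ∃ U ∈ F, ∀ N ⊆ M, N ∩ U = ∅ := by
  obtain ⟨U, hUF, hUM⟩ := hF.2.2.2 M (by rwa [hMc.closure_eq])
  refine ⟨U, hUF, fun N hNM => Set.subset_empty_iff.mp ?_⟩
  rw [← hUM, Set.inter_comm U M]
  exact Set.inter_subset_inter_left U hNM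

/-- If `F` is a remote filter of clopen subsets of `ω × 2^ω` in the ground model and
`P` is nwd-bounding, then `F` remains remote in the extension: for every name `Ṅ` for
a nowhere dense subset of `ω × 2^ω` and every condition `p` forcing `Ṅ` nowhere dense,
there are `q ≤ p` and `U ∈ F` with `q` forcing `Ṅ ∩ U = ∅`. -/
theorem remote_filter_preserved (𝔽 : ForcingNotion) (hnwd : NwdBounding 𝔽)
    (F : Set (Set (ℕ × (ℕ → Bool)))) (hF : IsRemoteClopenFilter F) :
    ∀ (N : {G // G ∈ 𝔽.Generic} → Set (ℕ × (ℕ → Bool))) (p : 𝔽.P),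
      (∀ G : {G // G ∈ 𝔽.Generic}, p ∈ G.1 → interior (closure (N G)) = ∅) →
      ∃ q : 𝔽.P, 𝔽.le q p ∧ ∃ U ∈ F,
        ∀ G : {G // G ∈ 𝔽.Generic}, q ∈ G.1 → N G ∩ U = ∅ := by
  intro N p hp
  obtain ⟨M, hMc, hMi, q, hqp, hqM⟩ := hnwd N p hp
  obtain ⟨U, hUF, hU⟩ := hF.exists_disjoint_of_subset_closed_nowhereDense hMc hMi
  exact ⟨q, hqp, U, hUF, fun G hG => hU (N G) (hqM G hG)⟩
end

section
/- Every countable regular space of weight strictly less than cov(M) is discretely generated. -/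
open TopologicalSpace Cardinal

/-- A space is discretely generated if every point in the closure of a set `A` is in the
closure of a discrete subset of `A`. -/
def DiscretelyGenerated (X : Type*) [TopologicalSpace X] : Prop :=
  ∀ (A : Set X) (p : X), p ∈ closure A →
    ∃ D : Set X, D ⊆ A ∧ DiscreteTopology D ∧ p ∈ closure D

/-!
Let `p ∈ closure A` with `p ∉ A`. Force with finite sets of points `a ∈ A`, each carrying an
open neighbourhood `U_a` with `p ∉ closure U_a` (regularity) that contains no other point of the
condition; a new point is taken in `A ∩ V` outside the finitely many closures `closure U_a`, for
`V` a basic neighbourhood of `p`. The poset is countable since `X` is, so with fewer than `cov(M)`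
neighbourhoods `V` to meet, `MA(countable)` yields a generic chain, and the union of its points is
a discrete subset of `A` accumulating at `p`.
-/

open Set Filter Topology PiNat

theorem nonempty_iInter_of_lt_covMeager {ι : Type} {U : ι → Set (ℕ → ℕ)}
    (hU : ∀ i, U i ∈ residual (ℕ → ℕ)) (hι : #ι < covMeager) : (⋂ i, U i).Nonempty := by
  by_contra hempty
  have hcover : ⋃₀ range (fun i => (U i)ᶜ) = Set.univ := by
    rw [sUnion_range, ← compl_iInter, not_nonempty_iff_eq_empty.mp hempty, compl_empty]
  have hle : covMeager ≤ #(range fun i => (U i)ᶜ) :=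
    csInf_le' ⟨_, forall_mem_range.2 fun i => by simpa [IsMeagre] using hU i, hcover, rfl⟩
  exact (hle.trans mk_range_le).not_gt hι

section GreedyChain

variable {P : Type*} [Preorder P] (e : ℕ → P) (p₀ : P)

open Classical in
/-- Every `f : ℕ → ℕ` codes a chain through the enumeration `e`; for a sufficiently generic `f`
this chain meets every cofinal set. -/
noncomputable def greedyChain (f : ℕ → ℕ) : ℕ → P
  | 0 => p₀
  | n + 1 => if greedyChain f n ≤ e (f n) then e (f n) else greedyChain f n

theorem greedyChain_monotone (f : ℕ → ℕ) : Monotone (greedyChain e p₀ f) := by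
  refine monotone_nat_of_le_succ fun n => ?_
  simp only [greedyChain]
  split_ifs with h
  exacts [h, le_rfl]

theorem greedyChain_succ_of_le {f : ℕ → ℕ} {n : ℕ} (h : greedyChain e p₀ f n ≤ e (f n)) :
    greedyChain e p₀ f (n + 1) = e (f n) := by
  simp only [greedyChain, if_pos h]

theorem greedyChain_eq_of_mem_cylinder {f g : ℕ → ℕ} {n : ℕ} (hg : g ∈ cylinder f n) :
    greedyChain e p₀ g n = greedyChain e p₀ f n := by
  induction n with
  | zero => rfl
  | succ n ih =>
    unfold greedyChain
    rw [ih (cylinder_anti f n.le_succ hg), hg n n.lt_succ_self]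

theorem isOpen_setOf_exists_greedyChain_mem (D : Set P) :
    IsOpen {f | ∃ n, greedyChain e p₀ f n ∈ D} := by
  refine isOpen_iff_mem_nhds.2 fun f ⟨n, hn⟩ => mem_of_superset
    ((isOpen_cylinder _ f n).mem_nhds (self_mem_cylinder f n)) fun g hg => ⟨n, ?_⟩
  rwa [greedyChain_eq_of_mem_cylinder e p₀ hg]

theorem dense_setOf_exists_greedyChain_mem (he : Function.Surjective e) {D : Set P}
    (hD : IsCofinal D) : Dense {f | ∃ n, greedyChain e p₀ f n ∈ D} := by
  refine (isTopologicalBasis_cylinders _).dense_iff.2 ?_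
  rintro _ ⟨f, n, rfl⟩ -
  obtain ⟨r, hrD, hr⟩ := hD (greedyChain e p₀ f n)
  obtain ⟨m, rfl⟩ := he r
  let g : ℕ → ℕ := fun k => if k < n then f k else m
  have hg : g ∈ cylinder f n := fun k hk => if_pos hk
  have hgn : g n = m := if_neg n.lt_irrefl
  rw [← greedyChain_eq_of_mem_cylinder e p₀ hg, ← hgn] at hr
  exact ⟨g, hg, n + 1, by rwa [greedyChain_succ_of_le e p₀ hr, hgn]⟩

end GreedyChain

/-- Martin's axiom for countable posets below `cov(M)`, in the form of a generic chain. -/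
theorem exists_monotone_forall_exists_mem_of_lt_covMeager {P : Type*} [Preorder P]
    [Countable P] [Nonempty P] {ι : Type} {D : ι → Set P} (hD : ∀ i, IsCofinal (D i))
    (hι : #ι < covMeager) : ∃ r : ℕ → P, Monotone r ∧ ∀ i, ∃ n, r n ∈ D i := by
  obtain ⟨e, he⟩ := exists_surjective_nat P
  obtain ⟨f, hf⟩ := nonempty_iInter_of_lt_covMeager (fun i => residual_of_dense_open
    (isOpen_setOf_exists_greedyChain_mem e (e 0) (D i))
    (dense_setOf_exists_greedyChain_mem e (e 0) he (hD i))) hι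
  exact ⟨greedyChain e (e 0) f, greedyChain_monotone e (e 0) f, mem_iInter.1 hf⟩

section IsolatingFamily

variable {X : Type*}

/-- A pair `(x, S)` is the point `x` together with its isolating neighbourhood `N x S`; the
finite set `S` records the points that this neighbourhood was chosen to avoid. -/
def IsIsolatingFamily (A : Set X) (p : X) (N : X → Finset X → Set X)
    (c : Set (X × Finset X)) : Prop :=
  ∀ z ∈ c, z.1 ∈ A ∧ p ∈ z.2 ∧ ∀ z' ∈ c, z'.1 ∈ N z.1 z.2 → z'.1 = z.1

variable {A : Set X} {p : X} {N : X → Finset X → Set X} {c : Set (X × Finset X)}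

theorem IsIsolatingFamily.image_fst_subset (hc : IsIsolatingFamily A p N c) :
    Prod.fst '' c ⊆ A := by
  rintro _ ⟨z, hz, rfl⟩
  exact (hc z hz).1

theorem isIsolatingFamily_iUnion {ι : Sort*} {c : ι → Set (X × Finset X)}
    (hdir : Directed (· ⊆ ·) c) (hc : ∀ i, IsIsolatingFamily A p N (c i)) :
    IsIsolatingFamily A p N (⋃ i, c i) := by
  intro z hz
  obtain ⟨i, hzi⟩ := mem_iUnion.1 hz
  refine ⟨(hc i z hzi).1, (hc i z hzi).2.1, fun z' hz' => ?_⟩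
  obtain ⟨j, hz'j⟩ := mem_iUnion.1 hz'
  obtain ⟨k, hik, hjk⟩ := hdir i j
  exact (hc k z (hik hzi)).2.2 z' (hjk hz'j)

theorem isIsolatingFamily_insert (hc : IsIsolatingFamily A p N c) {a : X} {S : Finset X}
    (ha : a ∈ A) (hpS : p ∈ S) (hcS : ∀ z ∈ c, z.1 ∈ S) (haS : Disjoint (N a S) (↑S \ {a}))
    (hac : ∀ z ∈ c, a ∉ N z.1 z.2) : IsIsolatingFamily A p N (insert (a, S) c) := by
  rintro z (rfl | hz)
  · refine ⟨ha, hpS, fun z' hz' hz'N => ?_⟩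
    rcases hz' with rfl | hz'
    · rfl
    · by_contra hne
      exact disjoint_left.1 haS hz'N ⟨hcS z' hz', hne⟩
  · obtain ⟨hzA, hpz, hzN⟩ := hc z hz
    refine ⟨hzA, hpz, fun z' hz' hz'N => ?_⟩
    rcases hz' with rfl | hz'
    · exact absurd hz'N (hac z hz)
    · exact hzN z' hz' hz'N

variable [TopologicalSpace X]

theorem IsIsolatingFamily.discreteTopology (hc : IsIsolatingFamily A p N c)
    (hN_open : ∀ x S, IsOpen (N x S)) (hN_mem : ∀ x S, x ∈ N x S) :
    DiscreteTopology (Prod.fst '' c) := by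
  rw [discreteTopology_subtype_iff']
  rintro _ ⟨z, hz, rfl⟩
  refine ⟨N z.1 z.2, hN_open _ _, subset_antisymm ?_ ?_⟩
  · rintro _ ⟨hyN, z', hz', rfl⟩
    exact (hc z hz).2.2 z' hz' hyN
  · rintro _ rfl
    exact ⟨hN_mem _ _, z, hz, rfl⟩

theorem IsIsolatingFamily.exists_finset_superset {c : Finset (X × Finset X)}
    (hc : IsIsolatingFamily A p N c) (hp : p ∈ closure A) (hpA : p ∉ A)
    (hN : ∀ x S, Disjoint (closure (N x S)) (↑S \ {x})) {V : Set X} (hV : V ∈ 𝓝 p) :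
    ∃ c' : Finset (X × Finset X), c ⊆ c' ∧ IsIsolatingFamily A p N c' ∧ ∃ z ∈ c', z.1 ∈ V := by
  have hpc : ∀ z ∈ c, p ∉ closure (N z.1 z.2) := fun z hz hpz =>
    disjoint_left.1 (hN z.1 z.2) hpz ⟨(hc z hz).2.1, fun hpz => hpA (hpz ▸ (hc z hz).1)⟩
  have hW : V ∩ ⋂ z ∈ c, (closure (N z.1 z.2))ᶜ ∈ 𝓝 p :=
    inter_mem hV ((biInter_finset_mem c).2 fun z hz => isClosed_closure.compl_mem_nhds (hpc z hz))
  obtain ⟨a, ⟨haV, haW⟩, haA⟩ := mem_closure_iff_nhds.1 hp _ hW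
  classical
  have hac : ∀ z ∈ c, a ∉ N z.1 z.2 := fun z hz haz => mem_iInter₂.1 haW z hz (subset_closure haz)
  refine ⟨insert (a, insert p (c.image Prod.fst)) c, c.subset_insert _, ?_,
    _, c.mem_insert_self _, haV⟩
  rw [Finset.coe_insert]
  exact isIsolatingFamily_insert hc haA (Finset.mem_insert_self _ _)
    (fun z hz => Finset.mem_insert_of_mem (Finset.mem_image_of_mem _ hz))
    ((hN a _).mono_left subset_closure) hac

end IsolatingFamily

theorem exists_discrete_subset_mem_closure_of_hasBasis {X : Type*} [TopologicalSpace X]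
    [Countable X] [T3Space X] {A : Set X} {p : X} (hp : p ∈ closure A) {ι : Type}
    {q : ι → Prop} {s : ι → Set X} (hs : (𝓝 p).HasBasis q s) (hι : #ι < covMeager) :
    ∃ D ⊆ A, DiscreteTopology D ∧ p ∈ closure D := by
  by_cases hpA : p ∈ A
  · exact ⟨{p}, singleton_subset_iff.2 hpA, inferInstance, subset_closure rfl⟩
  have hN : ∀ (x : X) (S : Finset X), ∃ U, (x ∈ U ∧ IsOpen U) ∧ closure U ⊆ (↑S \ {x})ᶜ :=
    fun x S => (hasBasis_opens_closure x).mem_iff.1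
      (S.finite_toSet.sdiff.isClosed.compl_mem_nhds fun hx => hx.2 rfl)
  choose N hN using hN
  let P := {c : Finset (X × Finset X) // IsIsolatingFamily A p N c}
  have : Nonempty P := ⟨⟨∅, fun _ hz => absurd hz (Finset.notMem_empty _)⟩⟩
  obtain ⟨r, hr_mono, hr_meets⟩ := exists_monotone_forall_exists_mem_of_lt_covMeager
    (P := P) (D := fun i : {i // q i} => {c | ∃ z ∈ c.1, z.1 ∈ s i})
    (fun ⟨i, hi⟩ ⟨c, hc⟩ => by
      obtain ⟨c', hcc', hc', hV⟩ := hc.exists_finset_superset hp hpA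
        (fun x S => subset_compl_iff_disjoint_right.1 (hN x S).2) (hs.mem_of_mem hi)
      exact ⟨⟨c', hc'⟩, hV, hcc'⟩)
    (mk_subtype_le _ |>.trans_lt hι)
  have hG : IsIsolatingFamily A p N (⋃ n, ((r n).1 : Set (X × Finset X))) :=
    isIsolatingFamily_iUnion (Monotone.directed_le fun _ _ h => Finset.coe_subset.2 (hr_mono h))
      fun n => (r n).2
  refine ⟨_, hG.image_fst_subset, hG.discreteTopology (fun x S => (hN x S).1.2)
    (fun x S => (hN x S).1.1), (mem_closure_iff_nhds_basis hs).2 fun i hi => ?_⟩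
  obtain ⟨n, z, hz, hzs⟩ := hr_meets ⟨i, hi⟩
  exact ⟨z.1, ⟨z, mem_iUnion.2 ⟨n, hz⟩, rfl⟩, hzs⟩

/-- Every countable regular space of weight strictly less than `cov(M)` is discretely
generated. -/
theorem countable_regular_small_weight_discretely_generated
    (X : Type) [TopologicalSpace X] [Countable X] [T3Space X]
    (B : Set (Set X)) (hB : IsTopologicalBasis B) (hBw : #B < covMeager) :
    DiscretelyGenerated X := by
  intro A p hp
  have hbasis : (𝓝 p).HasBasis (fun U : B => p ∈ (U : Set X)) (↑) :=
    ⟨fun t => by simp [hB.nhds_hasBasis.mem_iff, and_comm]⟩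
  exact exists_discrete_subset_mem_closure_of_hasBasis hp hbasis hBw
end

section
/- Let κ < min{non(M), d} and for each α < κ let f_α be a function with infinite domain dom(f_α) ⊆ ω into ω. Suppose that for each n, the values f_α(n) arise as ranks in an increasing chain of closed nowhere dense sets. Then there is f : ω → ω such that for all α < κ and m < ω there is n ∈ dom(f_α) with n ≥ m and f_α(n) < f(n). -/
/-!
Let `e i n` be an element of `E i` above `n`. Fewer than `𝔡` functions `n ↦ f i (e i n)`
do not dominate, so some `h` exceeds each of them infinitely often, and the
running maximum of `h` then exceeds `f i` at the points `e i n ≥ n`.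
-/

open Cardinal Filter

theorem domNumber_le_mk_of_dominating (D : Set (ℕ → ℕ))
    (hD : ∀ f : ℕ → ℕ, ∃ g ∈ D, ∀ᶠ n in atTop, f n ≤ g n) : domNumber ≤ #D :=
  csInf_le' ⟨D, hD, rfl⟩

theorem exists_frequently_lt_of_mk_lt_domNumber {ι : Type} (G : ι → ℕ → ℕ)
    (hι : #ι < domNumber) : ∃ h : ℕ → ℕ, ∀ i, ∃ᶠ n in atTop, G i n < h n := by
  by_contra! hG
  have hdom : ∀ h : ℕ → ℕ, ∃ g ∈ Set.range G, ∀ᶠ n in atTop, h n ≤ g n := by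
    intro h
    obtain ⟨i, hi⟩ := hG h
    exact ⟨G i, Set.mem_range_self i, by simpa only [not_frequently, not_lt] using hi⟩
  exact hι.not_ge ((domNumber_le_mk_of_dominating _ hdom).trans mk_range_le)

/-- (van Douwen) Given fewer than `min{non(M), d}` partial functions `f_α` with
infinite domains `dom(f_α) ⊆ ω`, there is a single `f : ω → ω` such that for every `α`
and every `m` there is `n ∈ dom(f_α)` with `n ≥ m` and `f_α n < f n`. -/
theorem exists_function_exceeding_cofinally
    (ι : Type) (hι : #ι < min nonMeager domNumber)
    (E : ι → Set ℕ) (hE : ∀ i, (E i).Infinite)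
    (f : ι → ℕ → ℕ) :
    ∃ g : ℕ → ℕ, ∀ (i : ι) (m : ℕ), ∃ n ∈ E i, m ≤ n ∧ f i n < g n := by
  choose e heE hlt using fun i n => (hE i).exists_gt n
  obtain ⟨h, hh⟩ := exists_frequently_lt_of_mk_lt_domNumber (fun i n => f i (e i n))
    (hι.trans_le (min_le_right _ _))
  refine ⟨partialSups h, fun i m => ?_⟩
  obtain ⟨n, hmn, hn⟩ := frequently_atTop.mp (hh i) m
  exact ⟨e i n, heE i n, hmn.trans (hlt i n).le,
    hn.trans_le (le_partialSups_of_le h (hlt i n).le)⟩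
end
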